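/- arXiv:1101.1666 — 2 statements merged into one kernel-verified Lean document; each statement's English description precedes it below -/
import Mathlib

section
/- Let a_n denote the number of gapless triangular shapes of size n and ρ_{m,p} the number of gapless rectangular shapes with p rows and m columns. Then for every integer k with 1 ≤ k < n, the inequality a_n ≥ ρ_{n-k,k} · a_{n-k} holds. -/
/-- A gapless rectangular shape with `p` rows and `m` columns. -/
def IsGaplessRect (p m : ℕ) (r : ℕ → ℕ → ℕ) : Prop :=
  (∀ i j, 1 ≤ i → i ≤ p → 1 ≤ j → j ≤ m → r i j = 0 ∨ r i j = 1) ∧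
  (∀ i j, i < 1 ∨ p < i ∨ j < 1 ∨ m < j → r i j = 0) ∧
  (∀ j, 1 ≤ j → j < m → ∀ i, 1 ≤ i → i ≤ p →
     ∑ k ∈ Finset.Icc i p, r k j ≤ ∑ k ∈ Finset.Icc i p, r k (j + 1))

/-- A gapless triangular shape of size `n`: a 0/1 triangular array `s i j`
(`1 ≤ j ≤ i ≤ n`, with `s i j = 0` outside this range) whose column words
`f^(j) k = s (n+1-k) (n+1-j)` (for `1 ≤ k ≤ j`) satisfy, for each `1 ≤ j ≤ n-1`
and each `1 ≤ i ≤ j`, `∑_{k=1}^i f^(j) k ≥ ∑_{k=1}^i f^(j+1) k`. -/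
def IsGaplessTriShape (n : ℕ) (s : ℕ → ℕ → ℕ) : Prop :=
  (∀ i j, 1 ≤ j → j ≤ i → i ≤ n → s i j = 0 ∨ s i j = 1) ∧
  (∀ i j, j < 1 ∨ i < j ∨ n < i → s i j = 0) ∧
  (∀ j, 1 ≤ j → j + 1 ≤ n → ∀ i, 1 ≤ i → i ≤ j →
     ∑ k ∈ Finset.Icc 1 i, s (n + 1 - k) (n - j) ≤
       ∑ k ∈ Finset.Icc 1 i, s (n + 1 - k) (n + 1 - j))

/-!
Put the gapless triangle of size `m` on top of a gapless `k × m` rectangle and fill the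
remaining staircase (rows `m + 1, …, m + k`, columns `m + 1, …, i` in row `i`) with ones.
Written with tail sums of columns, the gapless condition of the resulting triangle of size
`m + k` is, on the first `m` columns, the sum of the conditions for the two pieces, and further
right it holds because the right-hand column is all ones there. Both pieces can be read off the
result, so this is an injection.
-/

open Finset

lemma sum_Icc_one_reflect (f : ℕ → ℕ) {i n : ℕ} (h : i ≤ n) :
    ∑ u ∈ Icc 1 i, f (n + 1 - u) = ∑ v ∈ Icc (n + 1 - i) n, f v := by
  apply sum_nbij' (fun u => n + 1 - u) (fun v => n + 1 - v) <;>
    (intro a ha; simp only [mem_Icc] at *) <;> omega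

lemma sum_Icc_split {M : Type*} [AddCommMonoid M] (f : ℕ → M) {a b c : ℕ}
    (hab : a ≤ b + 1) (hbc : b ≤ c) :
    ∑ u ∈ Icc a c, f u = ∑ u ∈ Icc a b, f u + ∑ u ∈ Icc (b + 1) c, f u := by
  rw [← sum_union (disjoint_left.2 fun x hx hx' => by simp only [mem_Icc] at hx hx'; omega)]
  congr 1
  ext x
  simp only [mem_union, mem_Icc]
  omega

namespace IsGaplessRect

variable {p m : ℕ} {r : ℕ → ℕ → ℕ}

lemma le_one (hr : IsGaplessRect p m r) (i j : ℕ) : r i j ≤ 1 := by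
  by_cases h : 1 ≤ i ∧ i ≤ p ∧ 1 ≤ j ∧ j ≤ m
  · rcases hr.1 i j h.1 h.2.1 h.2.2.1 h.2.2.2 with h' | h' <;> omega
  · rw [hr.2.1 i j (by omega)]
    omega

lemma sum_Icc_le (hr : IsGaplessRect p m r) {j a : ℕ} (hj : 1 ≤ j) (hjm : j < m) (ha : 1 ≤ a) :
    ∑ u ∈ Icc a p, r u j ≤ ∑ u ∈ Icc a p, r u (j + 1) := by
  by_cases hap : a ≤ p
  · exact hr.2.2 j hj hjm a ha hap
  · simp [Icc_eq_empty hap]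

end IsGaplessRect

lemma isGaplessTriShape_iff {n : ℕ} {s : ℕ → ℕ → ℕ} :
    IsGaplessTriShape n s ↔
      (∀ i j, 1 ≤ j → j ≤ i → i ≤ n → s i j = 0 ∨ s i j = 1) ∧
      (∀ i j, j < 1 ∨ i < j ∨ n < i → s i j = 0) ∧
      (∀ c a, 1 ≤ c → c < a → a ≤ n → ∑ u ∈ Icc a n, s u c ≤ ∑ u ∈ Icc a n, s u (c + 1)) := by
  refine and_congr_right' (and_congr_right'
    ⟨fun h c a hc hca han => ?_, fun h j hj hjn i hi hij => ?_⟩)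
  · have := h (n - c) (by omega) (by omega) (n + 1 - a) (by omega) (by omega)
    rwa [show n - (n - c) = c by omega, show n + 1 - (n - c) = c + 1 by omega,
      sum_Icc_one_reflect (s · c) (by omega), sum_Icc_one_reflect (s · (c + 1)) (by omega),
      show n + 1 - (n + 1 - a) = a by omega] at this
  · rw [sum_Icc_one_reflect (s · (n - j)) (by omega),
      sum_Icc_one_reflect (s · (n + 1 - j)) (by omega), show n + 1 - j = n - j + 1 by omega]
    exact h (n - j) (n + 1 - i) (by omega) (by omega) (by omega)

lemma IsGaplessTriShape.le_one {n : ℕ} {s : ℕ → ℕ → ℕ} (hs : IsGaplessTriShape n s) (i j : ℕ) :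
    s i j ≤ 1 := by
  by_cases h : 1 ≤ j ∧ j ≤ i ∧ i ≤ n
  · rcases hs.1 i j h.1 h.2.1 h.2.2 with h' | h' <;> omega
  · rw [hs.2.1 i j (by omega)]
    omega

instance (n : ℕ) : Finite {s : ℕ → ℕ → ℕ // IsGaplessTriShape n s} := by
  refine Finite.of_injective
    (fun s (i j : Fin (n + 1)) => (⟨s.1 i j, Nat.lt_succ_of_le (s.2.le_one i j)⟩ : Fin 2))
    fun s s' h => Subtype.ext (funext₂ fun i j => ?_)
  by_cases hij : i ≤ n ∧ j ≤ n
  · exact congrArg Fin.val (congrFun (congrFun h ⟨i, by omega⟩) ⟨j, by omega⟩)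
  · rw [s.2.2.1 i j (by omega), s'.2.2.1 i j (by omega)]

def triEmbed (m k : ℕ) (r t : ℕ → ℕ → ℕ) (i j : ℕ) : ℕ :=
  if j ≤ m then (if i ≤ m then t i j else r (i - m) j)
  else if j ≤ i ∧ i ≤ m + k then 1 else 0

section triEmbed

variable {m k : ℕ} {r t : ℕ → ℕ → ℕ}

lemma triEmbed_of_le {i j : ℕ} (hi : i ≤ m) (hj : j ≤ m) : triEmbed m k r t i j = t i j := by
  simp [triEmbed, hi, hj]

lemma triEmbed_add {v j : ℕ} (hv : 1 ≤ v) (hj : j ≤ m) : triEmbed m k r t (v + m) j = r v j := by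
  simp [triEmbed, hj, show ¬v + m ≤ m by omega]

lemma triEmbed_le_one (hr : IsGaplessRect k m r) (ht : IsGaplessTriShape m t) (i j : ℕ) :
    triEmbed m k r t i j ≤ 1 := by
  unfold triEmbed
  split_ifs
  exacts [ht.le_one i j, hr.le_one _ j, le_rfl, zero_le_one]

lemma sum_triEmbed_of_lt {a c : ℕ} (ha : m < a) (hc : c ≤ m) :
    ∑ u ∈ Icc a (m + k), triEmbed m k r t u c = ∑ v ∈ Icc (a - m) k, r v c := by
  obtain ⟨b, rfl⟩ : ∃ b, a = b + m := ⟨a - m, by omega⟩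
  rw [add_comm m k, ← map_add_right_Icc, sum_map, Nat.add_sub_cancel]
  exact sum_congr rfl fun v hv => triEmbed_add (by have := (mem_Icc.1 hv).1; omega) hc

lemma sum_triEmbed_of_le {a c : ℕ} (ha : a ≤ m + 1) (hc : c ≤ m) :
    ∑ u ∈ Icc a (m + k), triEmbed m k r t u c =
      ∑ u ∈ Icc a m, t u c + ∑ v ∈ Icc 1 k, r v c := by
  rw [sum_Icc_split _ ha (Nat.le_add_right m k), sum_triEmbed_of_lt m.lt_add_one hc,
    Nat.add_sub_cancel_left]
  exact congrArg (· + _) (sum_congr rfl fun u hu => triEmbed_of_le (mem_Icc.1 hu).2 hc)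

lemma triEmbed_column_le (hr : IsGaplessRect k m r) (ht : IsGaplessTriShape m t) {c a : ℕ}
    (hc : 1 ≤ c) (hca : c < a) :
    ∑ u ∈ Icc a (m + k), triEmbed m k r t u c ≤
      ∑ u ∈ Icc a (m + k), triEmbed m k r t u (c + 1) := by
  rcases lt_or_ge c m with hcm | hmc
  · rcases lt_or_ge m a with hma | ham
    · rw [sum_triEmbed_of_lt hma hcm.le, sum_triEmbed_of_lt hma hcm]
      exact hr.sum_Icc_le hc hcm (by omega)
    · rw [sum_triEmbed_of_le (by omega) hcm.le, sum_triEmbed_of_le (by omega) hcm]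
      exact add_le_add ((isGaplessTriShape_iff.1 ht).2.2 c a hc hca ham)
        (hr.sum_Icc_le hc hcm le_rfl)
  · refine sum_le_sum fun u hu => (triEmbed_le_one hr ht u c).trans_eq ?_
    have hu := mem_Icc.1 hu
    simp [triEmbed, show ¬c + 1 ≤ m by omega, show c + 1 ≤ u by omega, hu.2]

lemma isGaplessTriShape_triEmbed (hr : IsGaplessRect k m r) (ht : IsGaplessTriShape m t) :
    IsGaplessTriShape (m + k) (triEmbed m k r t) := by
  refine isGaplessTriShape_iff.2 ⟨fun i j _ _ _ => ?_, fun i j hij => ?_,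
    fun c a hc hca _ => triEmbed_column_le hr ht hc hca⟩
  · have := triEmbed_le_one hr ht i j
    omega
  · unfold triEmbed
    split_ifs with hj hi
    · exact ht.2.1 i j (by omega)
    · exact hr.2.1 _ j (by omega)
    · omega
    · rfl

lemma eq_of_triEmbed_eq {r' t' : ℕ → ℕ → ℕ} (hr : IsGaplessRect k m r) (ht : IsGaplessTriShape m t)
    (hr' : IsGaplessRect k m r') (ht' : IsGaplessTriShape m t')
    (h : triEmbed m k r t = triEmbed m k r' t') : r = r' ∧ t = t' := by
  constructor
  · funext v j
    by_cases hvj : 1 ≤ v ∧ j ≤ m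
    · simpa only [triEmbed_add hvj.1 hvj.2] using congrFun (congrFun h (v + m)) j
    · rw [hr.2.1 v j (by omega), hr'.2.1 v j (by omega)]
  · funext i j
    by_cases hij : i ≤ m ∧ j ≤ m
    · simpa only [triEmbed_of_le hij.1 hij.2] using congrFun (congrFun h i) j
    · rw [ht.2.1 i j (by omega), ht'.2.1 i j (by omega)]

end triEmbed

theorem card_gapless_tri_ge_general (n k : ℕ) (hkn : k < n) :
    Nat.card {r : ℕ → ℕ → ℕ // IsGaplessRect k (n - k) r} *
        Nat.card {s : ℕ → ℕ → ℕ // IsGaplessTriShape (n - k) s} ≤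
      Nat.card {s : ℕ → ℕ → ℕ // IsGaplessTriShape n s} := by
  obtain ⟨m, rfl⟩ : ∃ m, n = m + k := ⟨n - k, by omega⟩
  rw [Nat.add_sub_cancel, ← Nat.card_prod]
  refine Nat.card_le_card_of_injective
    (fun p => ⟨triEmbed m k p.1 p.2, isGaplessTriShape_triEmbed p.1.2 p.2.2⟩) ?_
  rintro ⟨⟨r, hr⟩, ⟨t, ht⟩⟩ ⟨⟨r', hr'⟩, ⟨t', ht'⟩⟩ h
  obtain ⟨rfl, rfl⟩ := eq_of_triEmbed_eq hr ht hr' ht' (congrArg Subtype.val h)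
  rfl

/-- If `a n` denotes the number of gapless triangular shapes of size `n` and
`ρ_{m,p}` the number of gapless rectangular shapes with `p` rows and `m` columns,
then for `1 ≤ k < n`, `a n ≥ ρ_{n-k,k} · a_{n-k}`. -/
theorem card_gapless_tri_ge (n k : ℕ) (hk : 1 ≤ k) (hkn : k < n) :
    Nat.card {r : ℕ → ℕ → ℕ // IsGaplessRect k (n - k) r} *
        Nat.card {s : ℕ → ℕ → ℕ // IsGaplessTriShape (n - k) s} ≤
      Nat.card {s : ℕ → ℕ → ℕ // IsGaplessTriShape n s} :=
  card_gapless_tri_ge_general n k hkn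
end

section
/- Let w be a Gog word of size n with corresponding monotone triangle a, and let 1 ≤ i ≤ n-1. Assume w does not contain a 312-subpattern at any position less than i. Then w contains a 312-subpattern at position i if and only if there exists j such that the monotone triangle a has a gap at row i, i.e., a_{i,j} - a_{i+1,j} > 1. -/
/-- `v` occurs at an odd-numbered (1-indexed) position of the tuple `t`
(modelled as a list; position `j+1` is odd iff the 0-based index `j` is even). -/
def OddPos (t : List ℕ) (v : ℕ) : Prop :=
  ∃ j, j < t.length ∧ j % 2 = 0 ∧ t.getD j 0 = v

/-- `v` occurs at an even-numbered (1-indexed) position of the tuple `t`. -/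
def EvenPos (t : List ℕ) (v : ℕ) : Prop :=
  ∃ j, j < t.length ∧ j % 2 = 1 ∧ t.getD j 0 = v

/-- A Gog word of size `n`: a sequence `x 1, …, x n` of strictly increasing tuples of
odd length, with entries in `{1, …, n}`, such that every integer occurring in an
even-numbered position of some tuple also occurs at an odd-numbered position of an
earlier and of a later tuple, and the successive occurrences of any repeated integer
alternate between odd- and even-numbered positions. -/
def IsGogWord (n : ℕ) (x : ℕ → List ℕ) : Prop :=
  (∀ i, 1 ≤ i → i ≤ n → (x i).length % 2 = 1) ∧
  (∀ i, 1 ≤ i → i ≤ n → List.Pairwise (· < ·) (x i)) ∧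
  (∀ i, 1 ≤ i → i ≤ n → ∀ v ∈ x i, 1 ≤ v ∧ v ≤ n) ∧
  (∀ i, 1 ≤ i → i ≤ n → ∀ v, EvenPos (x i) v →
     (∃ i', 1 ≤ i' ∧ i' < i ∧ OddPos (x i') v) ∧
     (∃ i', i < i' ∧ i' ≤ n ∧ OddPos (x i') v)) ∧
  (∀ v i i', 1 ≤ i → i < i' → i' ≤ n → v ∈ x i → v ∈ x i' →
     (∀ l, i < l → l < i' → v ∉ x l) → (OddPos (x i) v ↔ ¬ OddPos (x i') v))

/-- `m` is active with respect to the tuple `t = (p 1, q 1, …, p (k-1), q (k-1), p k)`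
if `m > p k` (the last entry) or `p j < m < q j` for some `j ≤ k - 1`. -/
def ActiveWrt (t : List ℕ) (m : ℕ) : Prop :=
  t.getD (t.length - 1) 0 < m ∨
  ∃ j, 2 * j + 1 < t.length ∧ t.getD (2 * j) 0 < m ∧ m < t.getD (2 * j + 1) 0

/-- The integers `(c, a, b)` form a 312-subpattern of the Gog word `x` at positions
`(i, j, k)`: `i < j < k`; `c, a, b` appear at odd-numbered positions of
`x i, x j, x k` respectively; `b` is not at an even-numbered position of any of
`x (i+1), …, x (k-1)`; `b` is active with respect to `x j`; and `a < b < c`. -/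
def Is312At (x : ℕ → List ℕ) (c a b : ℕ) (i j k : ℕ) : Prop :=
  i < j ∧ j < k ∧
  OddPos (x i) c ∧ OddPos (x j) a ∧ OddPos (x k) b ∧
  (∀ l, i < l → l < k → ¬ EvenPos (x l) b) ∧
  ActiveWrt (x j) b ∧ a < b ∧ b < c

/-- `a` is the monotone triangle corresponding to the Gog word `x` of size `n`:
each row is strictly increasing, row 1 consists of the single entry of `x 1`, and
(as a set) row `i+1` is obtained from row `i` by removing the entries at
even-numbered positions of `x (i+1)` and adjoining those at odd-numbered positions. -/
def GogTriangle (n : ℕ) (x : ℕ → List ℕ) (a : ℕ → ℕ → ℕ) : Prop :=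
  (∀ i, 1 ≤ i → i ≤ n → ∀ j j', 1 ≤ j → j < j' → j' ≤ i → a i j < a i j') ∧
  (1 ≤ n → a 1 1 = (x 1).getD 0 0) ∧
  (∀ i, 1 ≤ i → i + 1 ≤ n →
    {v | ∃ j, 1 ≤ j ∧ j ≤ i + 1 ∧ a (i + 1) j = v} =
      ({v | ∃ j, 1 ≤ j ∧ j ≤ i ∧ a i j = v} \ {v | EvenPos (x (i + 1)) v}) ∪
        {v | OddPos (x (i + 1)) v})

/-- A set of natural numbers consists of consecutive integers if it is an interval
`{m, m+1, …, M}`. -/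
def ConsecSet (S : Set ℕ) : Prop := ∃ m M, S = Set.Icc m M

/-!
Let `N_l(t)` be the number of entries `≤ t` in row `l` of the triangle. Passing from row `l` to
row `l + 1` removes the even-position entries of `x (l + 1)`, which all lie in row `l`, and adds
the odd-position ones, which do not; of the `c` entries `≤ t` of `x (l + 1)`, `⌈c / 2⌉` sit at odd
and `⌊c / 2⌋` at even positions, so `N_(l+1)(t) = N_l(t) + c % 2`. For `t ∉ x (l + 1)` the
parity of `c` is odd exactly when `t` is active with respect to `x (l + 1)`. Consequently row `l`
has a gap iff some value `b` is missing from rows `l` and `l + 1`, lies below an entry of row `l`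
and is active with respect to `x (l + 1)`.

A 312-subpattern `(c, a', b)` at position `l` provides such a `b`. Conversely, such a `b`
together with an odd-position entry `c > b` of `x l` is a 312-subpattern at position `l`: take
`a'` the first entry of `x (l + 1)` and `k` the first row after `l` containing `b`. If `x l` has
no odd-position entry above `b`, then its last entry, and hence every entry, is below `b`, and
`b` is such a value for row `l - 1` as well. So a gap at row `i` yields a 312-subpattern at some
position `≤ i`, which must be `i` when there is none earlier.
-/

open Finset

theorem MonotoneOn.le_iff_card_filter_le {α β : Type*} [LinearOrder α] [LinearOrder β]
    {f : α → β} {S : Finset α} (hf : MonotoneOn f S) {m : α} (hm : m ∈ S) (t : β) :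
    f m ≤ t ↔ #{k ∈ S | k ≤ m} ≤ #{k ∈ S | f k ≤ t} := by
  refine ⟨fun h ↦ card_le_card fun k hk ↦ ?_, fun h ↦ ?_⟩
  · simp only [mem_filter] at hk ⊢
    exact ⟨hk.1, (hf hk.1 hm hk.2).trans h⟩
  · by_contra! hlt
    have hsub : {k ∈ S | f k ≤ t} ⊂ {k ∈ S | k ≤ m} := by
      refine ssubset_of_subset_of_ne (fun k hk ↦ ?_) fun heq ↦ ?_
      · simp only [mem_filter] at hk ⊢
        exact ⟨hk.1, le_of_not_ge fun hmk ↦ (hf hm hk.1 hmk).not_gt (hk.2.trans_lt hlt)⟩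
      · have : m ∈ {k ∈ S | f k ≤ t} := heq ▸ mem_filter.2 ⟨hm, le_rfl⟩
        exact (mem_filter.1 this).2.not_gt hlt
    exact (card_lt_card hsub).not_ge h

theorem card_filter_range_mod_two (c : ℕ) :
    #{m ∈ range c | m % 2 = 0} = (c + 1) / 2 ∧ #{m ∈ range c | m % 2 = 1} = c / 2 := by
  induction c with
  | zero => simp
  | succ c ih =>
    simp only [range_add_one, filter_insert]
    split_ifs <;> simp_all [card_insert_of_notMem] <;> omega

theorem card_filter_le_mono (S : Finset ℕ) {s t : ℕ} (h : s ≤ t) :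
    #{v ∈ S | v ≤ s} ≤ #{v ∈ S | v ≤ t} :=
  card_le_card (monotone_filter_right S fun _ _ hv ↦ hv.trans h)

theorem notMem_of_card_filter_le_add_one_le {S : Finset ℕ} {t : ℕ}
    (h : #{v ∈ S | v ≤ t + 1} ≤ #{v ∈ S | v ≤ t}) : t + 1 ∉ S := fun ht ↦
  h.not_gt <| card_lt_card <|
    (ssubset_iff_of_subset (monotone_filter_right S fun _ _ hv ↦ hv.trans t.le_succ)).2
      ⟨t + 1, mem_filter.2 ⟨ht, le_rfl⟩, fun hmem ↦ by simp at hmem⟩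

theorem card_filter_le_lt_card {S : Finset ℕ} {b v : ℕ} (hv : v ∈ S) (hbv : b < v) :
    #{w ∈ S | w ≤ b} < #S :=
  card_lt_card (filter_ssubset.2 ⟨v, hv, hbv.not_ge⟩)

theorem List.getD_mem_of_lt {α : Type*} {l : List α} {d : α} {m : ℕ} (hm : m < l.length) :
    l.getD m d ∈ l := by
  rw [l.getD_eq_getElem d hm]
  exact l.getElem_mem hm

theorem List.Pairwise.strictMonoOn_getD {u : List ℕ} (hu : u.Pairwise (· < ·)) :
    StrictMonoOn (u.getD · 0) ↑(Finset.range u.length) := by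
  intro m hm m' hm' hlt
  simp only [coe_range, Set.mem_Iio] at hm hm'
  simp only [u.getD_eq_getElem 0 hm, u.getD_eq_getElem 0 hm']
  exact List.pairwise_iff_getElem.1 hu m m' hm hm' hlt

section Tuple

variable {u : List ℕ} {v : ℕ}

theorem OddPos.mem (h : OddPos u v) : v ∈ u := by
  obtain ⟨j, hj, -, rfl⟩ := h
  exact List.getD_mem_of_lt hj

theorem EvenPos.mem (h : EvenPos u v) : v ∈ u := by
  obtain ⟨j, hj, -, rfl⟩ := h
  exact List.getD_mem_of_lt hj

theorem oddPos_or_evenPos_of_mem (h : v ∈ u) : OddPos u v ∨ EvenPos u v := by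
  obtain ⟨m, hm, rfl⟩ := List.mem_iff_getElem.1 h
  rcases Nat.mod_two_eq_zero_or_one m with hp | hp
  · exact .inl ⟨m, hm, hp, u.getD_eq_getElem 0 hm⟩
  · exact .inr ⟨m, hm, hp, u.getD_eq_getElem 0 hm⟩

theorem not_oddPos_of_evenPos (hu : u.Pairwise (· < ·)) (h : EvenPos u v) : ¬ OddPos u v := by
  rintro ⟨m, hm, hp, rfl⟩
  obtain ⟨m', hm', hp', he⟩ := h
  have := hu.strictMonoOn_getD.injOn (by simpa using hm') (by simpa using hm) he
  omega

theorem le_getD_length_sub_one (hu : u.Pairwise (· < ·)) (hv : v ∈ u) :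
    v ≤ u.getD (u.length - 1) 0 := by
  obtain ⟨m, hm, rfl⟩ := List.mem_iff_getElem.1 hv
  rw [← u.getD_eq_getElem 0 hm]
  exact hu.strictMonoOn_getD.monotoneOn (by simpa using hm) (by simp; omega) (by omega)

def countLE (u : List ℕ) (s : ℕ) : ℕ := #{m ∈ range u.length | u.getD m 0 ≤ s}

theorem countLE_le_length (s : ℕ) : countLE u s ≤ u.length :=
  (card_filter_le _ _).trans_eq (card_range _)

theorem getD_le_iff_lt_countLE (hu : u.Pairwise (· < ·)) {m : ℕ} (hm : m < u.length) (s : ℕ) :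
    u.getD m 0 ≤ s ↔ m < countLE u s := by
  have hcard : #{k ∈ range u.length | k ≤ m} = m + 1 := by
    rw [show {k ∈ range u.length | k ≤ m} = range (m + 1) by ext; simp; omega, card_range]
  rw [Nat.lt_iff_add_one_le, ← hcard]
  exact hu.strictMonoOn_getD.monotoneOn.le_iff_card_filter_le (mem_range.2 hm) s

def oddPosFinset (u : List ℕ) : Finset ℕ := {m ∈ range u.length | m % 2 = 0}.image (u.getD · 0)

def evenPosFinset (u : List ℕ) : Finset ℕ := {m ∈ range u.length | m % 2 = 1}.image (u.getD · 0)

theorem mem_oddPosFinset : v ∈ oddPosFinset u ↔ OddPos u v := by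
  simp [oddPosFinset, OddPos, and_assoc]

theorem mem_evenPosFinset : v ∈ evenPosFinset u ↔ EvenPos u v := by
  simp [evenPosFinset, EvenPos, and_assoc]

theorem card_filter_le_image_getD (hu : u.Pairwise (· < ·)) (p : ℕ → Prop) [DecidablePred p]
    (s : ℕ) :
    #{w ∈ {m ∈ range u.length | p m}.image (u.getD · 0) | w ≤ s} =
      #{m ∈ range (countLE u s) | p m} := by
  rw [filter_image, card_image_of_injOn (hu.strictMonoOn_getD.injOn.mono
    (coe_subset.2 ((filter_subset _ _).trans (filter_subset _ _))))]
  congr 1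
  ext m
  simp only [mem_filter, mem_range]
  constructor
  · rintro ⟨⟨hm, hp⟩, hle⟩
    exact ⟨(getD_le_iff_lt_countLE hu hm s).1 hle, hp⟩
  · rintro ⟨hm, hp⟩
    have hm' := hm.trans_le (countLE_le_length s)
    exact ⟨⟨hm', hp⟩, (getD_le_iff_lt_countLE hu hm' s).2 hm⟩

theorem card_filter_oddPosFinset_le (hu : u.Pairwise (· < ·)) (s : ℕ) :
    #{w ∈ oddPosFinset u | w ≤ s} = (countLE u s + 1) / 2 := by
  rw [oddPosFinset, card_filter_le_image_getD hu, (card_filter_range_mod_two _).1]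

theorem card_filter_evenPosFinset_le (hu : u.Pairwise (· < ·)) (s : ℕ) :
    #{w ∈ evenPosFinset u | w ≤ s} = countLE u s / 2 := by
  rw [evenPosFinset, card_filter_le_image_getD hu, (card_filter_range_mod_two _).2]

theorem activeWrt_iff_countLE_mod_two (hu : u.Pairwise (· < ·)) (hlen : u.length % 2 = 1)
    {b : ℕ} (hb : b ∉ u) : ActiveWrt u b ↔ countLE u b % 2 = 1 := by
  have hle := countLE_le_length (u := u) b
  have hne : ∀ m < u.length, u.getD m 0 ≠ b := fun m hm he ↦ hb (he ▸ List.getD_mem_of_lt hm)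
  have hle_iff := fun m (hm : m < u.length) ↦ getD_le_iff_lt_countLE hu hm b
  constructor
  · rintro (hlast | ⟨j, hj, hlo, hhi⟩)
    · have := (hle_iff _ (by omega)).1 hlast.le
      omega
    · have h1 := (hle_iff _ (by omega)).1 hlo.le
      have h2 := (hle_iff _ hj).not.1 hhi.not_ge
      omega
  · intro hodd
    rcases hle.eq_or_lt with heq | hlt
    · exact .inl <| lt_of_le_of_ne ((hle_iff _ (by omega)).2 (by omega)) (hne _ (by omega))
    · refine .inr ⟨countLE u b / 2, by omega,
        lt_of_le_of_ne ((hle_iff _ (by omega)).2 (by omega)) (hne _ (by omega)), ?_⟩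
      exact not_le.1 fun h ↦ by have := (hle_iff _ (by omega)).1 h; omega

theorem getD_zero_lt_of_activeWrt (hu : u.Pairwise (· < ·)) (hlen : u.length % 2 = 1) {b : ℕ}
    (hb : b ∉ u) (h : ActiveWrt u b) : u.getD 0 0 < b := by
  have hodd := (activeWrt_iff_countLE_mod_two hu hlen hb).1 h
  have hpos : 0 < u.length := by omega
  exact lt_of_le_of_ne ((getD_le_iff_lt_countLE hu hpos b).2 (by omega))
    fun he ↦ hb (he ▸ List.getD_mem_of_lt hpos)

end Tuple

theorem exists_last_mem (x : ℕ → List ℕ) {v l i : ℕ} (hli : l ≤ i) (hv : v ∈ x l) :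
    ∃ l', l ≤ l' ∧ l' ≤ i ∧ v ∈ x l' ∧ ∀ m, l' < m → m ≤ i → v ∉ x m :=
  ⟨Nat.findGreatest (v ∈ x ·) i, Nat.le_findGreatest hli hv, Nat.findGreatest_le i,
    Nat.findGreatest_spec (P := (v ∈ x ·)) hli hv,
    fun _ h1 h2 ↦ Nat.findGreatest_is_greatest (P := (v ∈ x ·)) h1 h2⟩

namespace IsGogWord

variable {n : ℕ} {x : ℕ → List ℕ}

theorem length_mod_two (hw : IsGogWord n x) {i : ℕ} (hi1 : 1 ≤ i) (hin : i ≤ n) :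
    (x i).length % 2 = 1 :=
  hw.1 i hi1 hin

theorem pairwise (hw : IsGogWord n x) {i : ℕ} (hi1 : 1 ≤ i) (hin : i ≤ n) :
    (x i).Pairwise (· < ·) :=
  hw.2.1 i hi1 hin

theorem bounds_of_mem (hw : IsGogWord n x) {i v : ℕ} (hi1 : 1 ≤ i) (hin : i ≤ n) (hv : v ∈ x i) :
    1 ≤ v ∧ v ≤ n :=
  hw.2.2.1 i hi1 hin v hv

theorem exists_oddPos_of_evenPos (hw : IsGogWord n x) {i v : ℕ} (hi1 : 1 ≤ i) (hin : i ≤ n)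
    (h : EvenPos (x i) v) : ∃ i', 1 ≤ i' ∧ i' < i ∧ OddPos (x i') v :=
  (hw.2.2.2.1 i hi1 hin v h).1

theorem oddPos_iff_not_oddPos (hw : IsGogWord n x) {v i i' : ℕ} (hi1 : 1 ≤ i) (hii' : i < i')
    (hi'n : i' ≤ n) (hi : v ∈ x i) (hi' : v ∈ x i') (hbetween : ∀ l, i < l → l < i' → v ∉ x l) :
    OddPos (x i) v ↔ ¬ OddPos (x i') v :=
  hw.2.2.2.2 v i i' hi1 hii' hi'n hi hi' hbetween

theorem length_one (hw : IsGogWord n x) (hn : 1 ≤ n) : (x 1).length = 1 := by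
  have hodd := hw.length_mod_two le_rfl hn
  by_contra hne
  obtain ⟨i', hi'1, hi'2, -⟩ :=
    hw.exists_oddPos_of_evenPos (v := (x 1).getD 1 0) le_rfl hn ⟨1, by omega, rfl, rfl⟩
  omega

theorem notMem_of_forall_not_evenPos (hw : IsGogWord n x) {v l k m : ℕ} (hkn : k ≤ n)
    (hk : OddPos (x k) v) (heven : ∀ m, l < m → m < k → ¬ EvenPos (x m) v) (hlm : l < m)
    (hmk : m < k) : v ∉ x m := by
  intro hv
  obtain ⟨l', hml', hl'k, hl', hlast⟩ := exists_last_mem x (show m ≤ k - 1 by omega) hv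
  have halt := hw.oddPos_iff_not_oddPos (by omega) (by omega) hkn hl' hk.mem
    fun m' h1 h2 ↦ hlast m' h1 (by omega)
  rcases oddPos_or_evenPos_of_mem hl' with hodd | hev
  exacts [halt.1 hodd hk, heven l' (by omega) (by omega) hev]

end IsGogWord

def row (a : ℕ → ℕ → ℕ) (l : ℕ) : Finset ℕ := (Icc 1 l).image (a l)

theorem mem_row {a : ℕ → ℕ → ℕ} {l v : ℕ} : v ∈ row a l ↔ ∃ j, 1 ≤ j ∧ j ≤ l ∧ a l j = v := by
  simp [row, and_assoc]

namespace GogTriangle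

variable {n : ℕ} {x : ℕ → List ℕ} {a : ℕ → ℕ → ℕ}

theorem strictMonoOn (ha : GogTriangle n x a) {l : ℕ} (hl1 : 1 ≤ l) (hln : l ≤ n) :
    StrictMonoOn (a l) ↑(Icc 1 l) := by
  intro j hj j' hj' hlt
  simp only [coe_Icc, Set.mem_Icc] at hj hj'
  exact ha.1 l hl1 hln j j' hj.1 hlt hj'.2

theorem card_row (ha : GogTriangle n x a) {l : ℕ} (hl1 : 1 ≤ l) (hln : l ≤ n) :
    #(row a l) = l := by
  rw [row, card_image_of_injOn (ha.strictMonoOn hl1 hln).injOn, Nat.card_Icc, Nat.add_sub_cancel]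

theorem row_succ (ha : GogTriangle n x a) {i : ℕ} (hi1 : 1 ≤ i) (hin : i + 1 ≤ n) :
    row a (i + 1) = (row a i \ evenPosFinset (x (i + 1))) ∪ oddPosFinset (x (i + 1)) := by
  ext v
  simpa only [mem_union, mem_sdiff, mem_row, mem_oddPosFinset, mem_evenPosFinset, Set.mem_union,
    Set.mem_sdiff, Set.mem_ofPred_eq] using Set.ext_iff.1 (ha.2.2 i hi1 hin) v

theorem mem_row_succ_iff_of_notMem (ha : GogTriangle n x a) {i v : ℕ} (hi1 : 1 ≤ i)
    (hin : i + 1 ≤ n) (hv : v ∉ x (i + 1)) : v ∈ row a (i + 1) ↔ v ∈ row a i := by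
  rw [ha.row_succ hi1 hin, mem_union, mem_sdiff, mem_oddPosFinset, mem_evenPosFinset]
  exact ⟨fun h ↦ h.elim And.left fun h ↦ absurd h.mem hv, fun h ↦ .inl ⟨h, fun h' ↦ hv h'.mem⟩⟩

theorem mem_row_one (hw : IsGogWord n x) (ha : GogTriangle n x a) (hn : 1 ≤ n) {v : ℕ} :
    v ∈ row a 1 ↔ OddPos (x 1) v := by
  rw [mem_row, OddPos, hw.length_one hn]
  constructor
  · rintro ⟨j, hj1, hj, rfl⟩
    obtain rfl : j = 1 := by omega
    exact ⟨0, one_pos, rfl, (ha.2.1 hn).symm⟩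
  · rintro ⟨j, hj, -, rfl⟩
    obtain rfl : j = 0 := by omega
    exact ⟨1, le_rfl, le_rfl, ha.2.1 hn⟩

theorem mem_row_iff (hw : IsGogWord n x) (ha : GogTriangle n x a) {i v : ℕ} (hi1 : 1 ≤ i)
    (hin : i ≤ n) :
    v ∈ row a i ↔ ∃ l, 1 ≤ l ∧ l ≤ i ∧ OddPos (x l) v ∧ ∀ m, l < m → m ≤ i → v ∉ x m := by
  induction i, hi1 using Nat.le_induction with
  | base =>
    rw [ha.mem_row_one hw hin]
    refine ⟨fun h ↦ ⟨1, le_rfl, le_rfl, h, fun m h1 h2 ↦ absurd h2 (by omega)⟩, ?_⟩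
    rintro ⟨l, hl1, hl, h, -⟩
    obtain rfl : l = 1 := by omega
    exact h
  | succ i hi1 ih =>
    rw [ha.row_succ hi1 hin, mem_union, mem_sdiff, mem_oddPosFinset, mem_evenPosFinset,
      ih (by omega)]
    by_cases hodd : OddPos (x (i + 1)) v
    · simp only [hodd, or_true, true_iff]
      exact ⟨i + 1, by omega, le_rfl, hodd, fun m h1 h2 ↦ absurd h2 (by omega)⟩
    simp only [hodd, or_false]
    constructor
    · rintro ⟨⟨l, hl1, hli, hl, hlast⟩, hev⟩
      refine ⟨l, hl1, by omega, hl, fun m hlm hmi hm ↦ ?_⟩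
      rcases hmi.lt_or_eq with hmi | rfl
      · exact hlast m hlm (Nat.le_of_lt_succ hmi) hm
      · exact (oddPos_or_evenPos_of_mem hm).elim hodd hev
    · rintro ⟨l, hl1, hli, hl, hlast⟩
      have hli : l ≤ i := by
        rcases hli.eq_or_lt with rfl | h
        exacts [absurd hl hodd, Nat.le_of_lt_succ h]
      exact ⟨⟨l, hl1, hli, hl, fun m h1 h2 ↦ hlast m h1 (by omega)⟩,
        fun hev ↦ hlast (i + 1) (by omega) le_rfl hev.mem⟩

theorem mem_row_of_oddPos (hw : IsGogWord n x) (ha : GogTriangle n x a) {l v : ℕ} (hl1 : 1 ≤ l)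
    (hln : l ≤ n) (h : OddPos (x l) v) : v ∈ row a l :=
  (ha.mem_row_iff hw hl1 hln).2 ⟨l, hl1, le_rfl, h, fun m h1 h2 ↦ absurd h2 (by omega)⟩

theorem notMem_row_of_oddPos (hw : IsGogWord n x) (ha : GogTriangle n x a) {m k v : ℕ}
    (hm1 : 1 ≤ m) (hmk : m < k) (hkn : k ≤ n) (hk : OddPos (x k) v)
    (hbetween : ∀ m', m < m' → m' < k → v ∉ x m') : v ∉ row a m := by
  intro hv
  obtain ⟨l, hl1, hlm, hl, hlast⟩ := (ha.mem_row_iff hw hm1 (by omega)).1 hv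
  refine (hw.oddPos_iff_not_oddPos hl1 (by omega) hkn hl.mem hk.mem fun m' h1 h2 ↦ ?_).1 hl hk
  rcases le_or_gt m' m with h | h
  exacts [hlast m' h1 h, hbetween m' h h2]

theorem mem_row_of_evenPos (hw : IsGogWord n x) (ha : GogTriangle n x a) {i v : ℕ} (hi1 : 1 ≤ i)
    (hin : i + 1 ≤ n) (h : EvenPos (x (i + 1)) v) : v ∈ row a i := by
  obtain ⟨i', hi'1, hi'i, hi'⟩ := hw.exists_oddPos_of_evenPos (by omega) hin h
  obtain ⟨l, hi'l, hli, hl, hlast⟩ := exists_last_mem x (show i' ≤ i by omega) hi'.mem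
  have hlodd : OddPos (x l) v :=
    (hw.oddPos_iff_not_oddPos (by omega) (by omega) hin hl h.mem
      fun m h1 h2 ↦ hlast m h1 (by omega)).2 (not_oddPos_of_evenPos (hw.pairwise (by omega) hin) h)
  exact (ha.mem_row_iff hw hi1 (by omega)).2 ⟨l, by omega, hli, hlodd, hlast⟩

theorem notMem_row_of_evenPos (hw : IsGogWord n x) (ha : GogTriangle n x a) {i v : ℕ}
    (hi1 : 1 ≤ i) (hin : i + 1 ≤ n) (h : EvenPos (x (i + 1)) v) : v ∉ row a (i + 1) := by
  rw [ha.row_succ hi1 hin, mem_union, mem_sdiff, mem_oddPosFinset, mem_evenPosFinset]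
  rintro (⟨-, hev⟩ | hodd)
  exacts [hev h, not_oddPos_of_evenPos (hw.pairwise (by omega) hin) h hodd]

theorem notMem_of_notMem_row (hw : IsGogWord n x) (ha : GogTriangle n x a) {i v : ℕ}
    (hi1 : 1 ≤ i) (hin : i + 1 ≤ n) (hi : v ∉ row a i) (hi' : v ∉ row a (i + 1)) :
    v ∉ x (i + 1) := fun hv ↦ by
  rcases oddPos_or_evenPos_of_mem hv with h | h
  exacts [hi' (ha.mem_row_of_oddPos hw (by omega) hin h), hi (ha.mem_row_of_evenPos hw hi1 hin h)]

theorem row_eq_Icc (hw : IsGogWord n x) (ha : GogTriangle n x a) (hn : 1 ≤ n) :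
    row a n = Icc 1 n := by
  refine eq_of_subset_of_card_le (fun v hv ↦ ?_)
    (by rw [ha.card_row hn le_rfl, Nat.card_Icc, Nat.add_sub_cancel])
  obtain ⟨l, hl1, hln, hl, -⟩ := (ha.mem_row_iff hw hn le_rfl).1 hv
  exact mem_Icc.2 (hw.bounds_of_mem hl1 hln hl.mem)

theorem le_iff_le_card_filter_row (ha : GogTriangle n x a) {l j : ℕ} (hl1 : 1 ≤ l) (hln : l ≤ n)
    (hj1 : 1 ≤ j) (hjl : j ≤ l) (t : ℕ) : a l j ≤ t ↔ j ≤ #{v ∈ row a l | v ≤ t} := by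
  have hmono := ha.strictMonoOn hl1 hln
  have hcount : #{k ∈ Icc 1 l | k ≤ j} = j := by
    rw [show {k ∈ Icc 1 l | k ≤ j} = Icc 1 j by ext; simp; omega, Nat.card_Icc, Nat.add_sub_cancel]
  rw [hmono.monotoneOn.le_iff_card_filter_le (mem_Icc.2 ⟨hj1, hjl⟩), hcount, row, filter_image,
    card_image_of_injOn (hmono.injOn.mono (coe_subset.2 (filter_subset _ _)))]

theorem card_filter_row_succ (hw : IsGogWord n x) (ha : GogTriangle n x a) {i : ℕ} (hi1 : 1 ≤ i)
    (hin : i + 1 ≤ n) (t : ℕ) :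
    #{v ∈ row a (i + 1) | v ≤ t} = #{v ∈ row a i | v ≤ t} + countLE (x (i + 1)) t % 2 := by
  have hu := hw.pairwise (by omega) hin
  have hE : evenPosFinset (x (i + 1)) ⊆ row a i := fun v hv ↦
    ha.mem_row_of_evenPos hw hi1 hin (mem_evenPosFinset.1 hv)
  have hO : Disjoint (row a i) (oddPosFinset (x (i + 1))) := disjoint_right.2 fun v hv ↦
    ha.notMem_row_of_oddPos hw hi1 (by omega) hin (mem_oddPosFinset.1 hv) fun m h1 h2 ↦ by omega
  have hEt : {v ∈ evenPosFinset (x (i + 1)) | v ≤ t} ⊆ {v ∈ row a i | v ≤ t} :=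
    filter_subset_filter _ hE
  have hsdiff : {v ∈ row a i \ evenPosFinset (x (i + 1)) | v ≤ t} =
      {v ∈ row a i | v ≤ t} \ {v ∈ evenPosFinset (x (i + 1)) | v ≤ t} := by
    ext; simp only [mem_filter, mem_sdiff]; tauto
  have hle := card_le_card hEt
  rw [card_filter_evenPosFinset_le hu] at hle
  rw [ha.row_succ hi1 hin, filter_union, card_union_of_disjoint
    (disjoint_filter_filter (hO.mono_left sdiff_subset)), hsdiff, card_sdiff_of_subset hEt,
    card_filter_evenPosFinset_le hu, card_filter_oddPosFinset_le hu]
  omega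

end GogTriangle

/-- `b` lies strictly inside a gap `a (l + 1) j < b < a l j` of row `l`. -/
def IsGapValue (x : ℕ → List ℕ) (a : ℕ → ℕ → ℕ) (l b : ℕ) : Prop :=
  b ∉ row a l ∧ b ∉ row a (l + 1) ∧ (∃ v ∈ row a l, b < v) ∧ ActiveWrt (x (l + 1)) b

section GapValue

variable {n : ℕ} {x : ℕ → List ℕ} {a : ℕ → ℕ → ℕ}

theorem isGapValue_of_gap (hw : IsGogWord n x) (ha : GogTriangle n x a) {i j : ℕ} (hi1 : 1 ≤ i)
    (hin : i + 1 ≤ n) (hj1 : 1 ≤ j) (hji : j ≤ i) (hgap : a (i + 1) j + 1 < a i j) :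
    IsGapValue x a i (a i j - 1) := by
  set t := a i j - 2
  have hlo : j ≤ #{v ∈ row a (i + 1) | v ≤ t} :=
    (ha.le_iff_le_card_filter_row (by omega) hin hj1 (by omega) t).1 (by omega)
  have hhi : #{v ∈ row a i | v ≤ t + 1} < j := not_le.1 fun h ↦ by
    have := (ha.le_iff_le_card_filter_row hi1 (by omega) hj1 hji _).2 h
    omega
  have hstep := ha.card_filter_row_succ hw hi1 hin t
  have hstep' := ha.card_filter_row_succ hw hi1 hin (t + 1)
  have hmono := card_filter_le_mono (row a i) (Nat.le_add_right t 1)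
  have hmono' := card_filter_le_mono (row a (i + 1)) (Nat.le_add_right t 1)
  have hb : a i j - 1 = t + 1 := by omega
  rw [hb]
  have hbi : t + 1 ∉ row a i := notMem_of_card_filter_le_add_one_le (by omega)
  have hbi' : t + 1 ∉ row a (i + 1) := notMem_of_card_filter_le_add_one_le (by omega)
  refine ⟨hbi, hbi', ⟨a i j, mem_row.2 ⟨j, hj1, hji, rfl⟩, by omega⟩, ?_⟩
  rw [activeWrt_iff_countLE_mod_two (hw.pairwise (by omega) hin) (hw.length_mod_two (by omega) hin)
    (ha.notMem_of_notMem_row hw hi1 hin hbi hbi')]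
  omega

theorem exists_gap_of_isGapValue (hw : IsGogWord n x) (ha : GogTriangle n x a) {i b : ℕ}
    (hi1 : 1 ≤ i) (hin : i + 1 ≤ n) (hb : IsGapValue x a i b) :
    ∃ j, 1 ≤ j ∧ j ≤ i ∧ a (i + 1) j + 1 < a i j := by
  obtain ⟨hbi, hbi', ⟨v, hv, hbv⟩, hact⟩ := hb
  have hodd := (activeWrt_iff_countLE_mod_two (hw.pairwise (by omega) hin)
    (hw.length_mod_two (by omega) hin) (ha.notMem_of_notMem_row hw hi1 hin hbi hbi')).1 hact
  have hstep := ha.card_filter_row_succ hw hi1 hin b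
  have hlt := card_filter_le_lt_card hv hbv
  rw [ha.card_row hi1 (by omega)] at hlt
  set j := #{w ∈ row a i | w ≤ b} + 1
  have hlo : a (i + 1) j ≤ b :=
    (ha.le_iff_le_card_filter_row (by omega) hin (by omega) (by omega) b).2 (by omega)
  have hne : a (i + 1) j ≠ b := fun h ↦ hbi' (mem_row.2 ⟨j, by omega, by omega, h⟩)
  have hhi : ¬ a i j ≤ b := fun h ↦ by
    have := (ha.le_iff_le_card_filter_row hi1 (by omega) (by omega) (by omega) b).1 h
    omega
  exact ⟨j, by omega, by omega, by omega⟩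

theorem isGapValue_of_is312At (hw : IsGogWord n x) (ha : GogTriangle n x a) {c a' b l k : ℕ}
    (hl1 : 1 ≤ l) (hkn : k ≤ n) (h : Is312At x c a' b l (l + 1) k) : IsGapValue x a l b := by
  obtain ⟨-, hlk, hc, -, hb, heven, hact, -, hbc⟩ := h
  have hbetween := fun m ↦ hw.notMem_of_forall_not_evenPos (m := m) hkn hb heven
  exact ⟨ha.notMem_row_of_oddPos hw hl1 (by omega) hkn hb fun m h1 h2 ↦ hbetween m h1 h2,
    ha.notMem_row_of_oddPos hw (by omega) hlk hkn hb fun m h1 h2 ↦ hbetween m (by omega) h2,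
    ⟨c, ha.mem_row_of_oddPos hw hl1 (by omega) hc, hbc⟩, hact⟩

theorem exists_oddPos_of_notMem_row (hw : IsGogWord n x) (ha : GogTriangle n x a) {l b : ℕ}
    (hl1 : 1 ≤ l) (hln : l < n) (hbl : b ∉ row a l) (hbn : b ∈ row a n) :
    ∃ k, l < k ∧ k ≤ n ∧ OddPos (x k) b ∧ ∀ m, l < m → m < k → ¬ EvenPos (x m) b := by
  obtain ⟨k, ⟨hlk, hbk⟩, hmin⟩ : ∃ k, (l < k ∧ b ∈ row a k) ∧ ∀ m < k, ¬ (l < m ∧ b ∈ row a m) :=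
    ⟨_, Nat.find_spec (p := fun k ↦ l < k ∧ b ∈ row a k) ⟨n, hln, hbn⟩, fun m ↦ Nat.find_min _⟩
  have hkn : k ≤ n := not_lt.1 fun h ↦ hmin n h ⟨hln, hbn⟩
  have hnot : ∀ m, l ≤ m → m < k → b ∉ row a m := fun m hlm hmk hm ↦ by
    rcases hlm.eq_or_lt with rfl | hlm
    exacts [hbl hm, hmin m hmk ⟨hlm, hm⟩]
  obtain ⟨k, rfl⟩ : ∃ k', k = k' + 1 := ⟨k - 1, by omega⟩
  have hbx : b ∈ x (k + 1) := by
    by_contra h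
    exact hnot k (by omega) k.lt_succ_self ((ha.mem_row_succ_iff_of_notMem (by omega) hkn h).1 hbk)
  refine ⟨k + 1, hlk, hkn, ?_, fun m hlm hmk hev ↦ ?_⟩
  · rcases oddPos_or_evenPos_of_mem hbx with h | h
    exacts [h, absurd hbk (ha.notMem_row_of_evenPos hw (by omega) hkn h)]
  · obtain ⟨m, rfl⟩ : ∃ m', m = m' + 1 := ⟨m - 1, by omega⟩
    exact hnot m (by omega) (by omega) (ha.mem_row_of_evenPos hw (by omega) (by omega) hev)

theorem exists_is312At_of_isGapValue (hw : IsGogWord n x) (ha : GogTriangle n x a) {l b c : ℕ}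
    (hl1 : 1 ≤ l) (hln : l + 1 ≤ n) (hb : IsGapValue x a l b) (hc : OddPos (x l) c)
    (hbc : b < c) : ∃ a' k, k ≤ n ∧ Is312At x c a' b l (l + 1) k := by
  obtain ⟨hbl, hbl', -, hact⟩ := hb
  have hlen := hw.length_mod_two (by omega) hln
  have ha'b := getD_zero_lt_of_activeWrt (hw.pairwise (by omega) hln) hlen
    (ha.notMem_of_notMem_row hw hl1 hln hbl hbl') hact
  have hbn : b ∈ row a n := by
    have := hw.bounds_of_mem hl1 (by omega) hc.mem
    rw [ha.row_eq_Icc hw (by omega), mem_Icc]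
    omega
  obtain ⟨k, hlk, hkn, hk, heven⟩ := exists_oddPos_of_notMem_row hw ha hl1 (by omega) hbl hbn
  have hlk' : l + 1 < k := by
    rcases (Nat.succ_le_of_lt hlk).eq_or_lt with rfl | h
    exacts [absurd (ha.mem_row_of_oddPos hw (by omega) hkn hk) hbl', h]
  exact ⟨_, k, hkn, by omega, hlk', hc, ⟨0, by omega, rfl, rfl⟩, hk, heven, hact, ha'b, hbc⟩

theorem exists_oddPos_gt_or_isGapValue (hw : IsGogWord n x) (ha : GogTriangle n x a) {l b : ℕ}
    (hl1 : 1 ≤ l) (hln : l + 2 ≤ n) (hb : IsGapValue x a (l + 1) b) :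
    (∃ c, OddPos (x (l + 1)) c ∧ b < c) ∨ IsGapValue x a l b := by
  refine or_iff_not_imp_left.2 fun hc ↦ ?_
  simp only [not_exists, not_and, not_lt] at hc
  obtain ⟨hbl, hbl', ⟨v, hv, hbv⟩, -⟩ := hb
  have hlen := hw.length_mod_two (by omega) (by omega : l + 1 ≤ n)
  have hlast : OddPos (x (l + 1)) ((x (l + 1)).getD ((x (l + 1)).length - 1) 0) :=
    ⟨_, by omega, by omega, rfl⟩
  have hlast_lt : (x (l + 1)).getD ((x (l + 1)).length - 1) 0 < b :=
    lt_of_le_of_ne (hc _ hlast) fun h ↦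
      hbl (h ▸ ha.mem_row_of_oddPos hw (by omega) (by omega) hlast)
  have hlt : ∀ w ∈ x (l + 1), w < b := fun w hw' ↦
    (le_getD_length_sub_one (hw.pairwise (by omega) (by omega)) hw').trans_lt hlast_lt
  have hrow := fun w (hw' : w ∉ x (l + 1)) ↦ ha.mem_row_succ_iff_of_notMem hl1 (by omega) hw'
  exact ⟨fun h ↦ hbl ((hrow b fun h' ↦ (hlt b h').false).2 h), hbl,
    ⟨v, (hrow v fun h' ↦ (hlt v h').not_gt hbv).1 hv, hbv⟩, .inl hlast_lt⟩

theorem exists_le_isGapValue_oddPos_gt (hw : IsGogWord n x) (ha : GogTriangle n x a) {l b : ℕ}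
    (hl1 : 1 ≤ l) (hln : l + 1 ≤ n) (hb : IsGapValue x a l b) :
    ∃ l', 1 ≤ l' ∧ l' ≤ l ∧ IsGapValue x a l' b ∧ ∃ c, OddPos (x l') c ∧ b < c := by
  induction l, hl1 using Nat.le_induction with
  | base =>
    obtain ⟨v, hv, hbv⟩ := hb.2.2.1
    exact ⟨1, le_rfl, le_rfl, hb, v, (ha.mem_row_one hw (by omega)).1 hv, hbv⟩
  | succ l hl1 ih =>
    rcases exists_oddPos_gt_or_isGapValue hw ha hl1 hln hb with hc | hb'
    · exact ⟨l + 1, by omega, le_rfl, hb, hc⟩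
    · obtain ⟨l', hl'1, hl'l, hl'⟩ := ih (by omega) hb'
      exact ⟨l', hl'1, by omega, hl'⟩

end GapValue

/-- Let `w = x 1 … x n` be a Gog word with corresponding monotone triangle `a`, let
`1 ≤ i ≤ n - 1`, and assume `w` contains no 312-subpattern at any position `l < i`
(i.e. no 312-subpattern occurring at tuples `x l, x (l+1), x k` with `l < i`). Then
`w` contains a 312-subpattern at position `i` (occurring at tuples
`x i, x (i+1), x k` for some `k`) iff the triangle `a` has a gap at row `i`,
i.e. there is `j` with `a i j - a (i+1) j > 1`. -/
theorem subpattern312_at_iff_gap (n : ℕ) (x : ℕ → List ℕ) (a : ℕ → ℕ → ℕ)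
    (hw : IsGogWord n x) (ha : GogTriangle n x a)
    (i : ℕ) (hi1 : 1 ≤ i) (hi : i ≤ n - 1)
    (hno : ∀ c a' b l k, 1 ≤ l → l < i → k ≤ n → ¬ Is312At x c a' b l (l + 1) k) :
    (∃ c a' b k, k ≤ n ∧ Is312At x c a' b i (i + 1) k) ↔
    (∃ j, 1 ≤ j ∧ j ≤ i ∧ a (i + 1) j + 1 < a i j) := by
  have hin : i + 1 ≤ n := by omega
  constructor
  · rintro ⟨c, a', b, k, hk, h⟩
    exact exists_gap_of_isGapValue hw ha hi1 hin (isGapValue_of_is312At hw ha hi1 hk h)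
  · rintro ⟨j, hj1, hji, hgap⟩
    obtain ⟨l, hl1, hli, hl, c, hc, hbc⟩ := exists_le_isGapValue_oddPos_gt hw ha hi1 hin
      (isGapValue_of_gap hw ha hi1 hin hj1 hji hgap)
    obtain ⟨a', k, hk, h⟩ := exists_is312At_of_isGapValue hw ha hl1 (by omega) hl hc hbc
    rcases hli.eq_or_lt with rfl | hlt
    · exact ⟨c, a', _, k, hk, h⟩
    · exact absurd h (hno c a' _ l k hl1 hlt hk)
end
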